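/- arXiv:2308.08798 — 2 statements merged into one kernel-verified Lean document; each statement's English description precedes it below -/
import Mathlib

section
/- If E₁ and E₂ are two totally even subsets of the edges of the m × n grid graph that contain exactly the same edges of the bottom row (i.e., they agree on every edge joining (i,1) to (i+1,1)), then E₁ = E₂. -/
namespace Slitherlink

/-- Vertices of grids: integer points of the plane. -/
abbrev V : Type := ℤ × ℤ

/-- Edges: unordered pairs of vertices. -/
abbrev Edge : Type := Sym2 V

/-- `p` is a vertex of the `m × n` grid. -/
def gridVertex (m n : ℤ) (p : V) : Prop :=
  1 ≤ p.1 ∧ p.1 ≤ m ∧ 1 ≤ p.2 ∧ p.2 ≤ n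

/-- `e` is an edge of the `m × n` grid: a unit segment between grid vertices. -/
def gridEdge (m n : ℤ) (e : Edge) : Prop :=
  ∃ p q : V, e = s(p, q) ∧ gridVertex m n p ∧ gridVertex m n q ∧
    ((q.1 = p.1 + 1 ∧ q.2 = p.2) ∨ (q.1 = p.1 ∧ q.2 = p.2 + 1))

/-- The four boundary edges of the unit cell with lower-left corner `(a, b)`. -/
def cellEdges (a b : ℤ) : Set Edge :=
  {s((a, b), (a + 1, b)), s((a, b), (a, b + 1)),
   s((a + 1, b), (a + 1, b + 1)), s((a, b + 1), (a + 1, b + 1))}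

/-- `(a, b)` is the lower-left corner of a cell of the `m × n` grid. -/
def isCell (m n a b : ℤ) : Prop := 1 ≤ a ∧ a + 1 ≤ m ∧ 1 ≤ b ∧ b + 1 ≤ n

/-- Number of edges of `E` incident with the vertex `p`. -/
noncomputable def degree (E : Set Edge) (p : V) : ℕ := {e ∈ E | p ∈ e}.ncard

/-- Number of edges of `E` among the four boundary edges of the cell at `(a, b)`. -/
noncomputable def cellCount (E : Set Edge) (a b : ℤ) : ℕ := (E ∩ cellEdges a b).ncard

/-- A set of edges of the `m × n` grid is totally even if every vertex is incident with an
even number of its edges and every cell contains an even number of its edges. -/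
def TotallyEven (m n : ℤ) (E : Set Edge) : Prop :=
  (∀ e ∈ E, gridEdge m n e) ∧
  (∀ p : V, Even (degree E p)) ∧
  (∀ a b : ℤ, isCell m n a b → Even (cellCount E a b))

/-- The graph on `V` whose edges are the members of `C`. -/
def cycleGraph (C : Set Edge) : SimpleGraph V where
  Adj p q := p ≠ q ∧ s(p, q) ∈ C
  symm := by
    constructor
    intro p q h
    refine ⟨h.1.symm, ?_⟩
    rw [Sym2.eq_swap]
    exact h.2
  loopless := by constructor; intro p h; exact h.1 rfl

/-- `C` is a cycle in the `m × n` grid: a nonempty connected 2-regular subgraph. -/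
def IsCycle (m n : ℤ) (C : Set Edge) : Prop :=
  C.Nonempty ∧ (∀ e ∈ C, gridEdge m n e) ∧
  (∀ p : V, degree C p = 0 ∨ degree C p = 2) ∧
  (∀ p q : V, (∃ e ∈ C, p ∈ e) → (∃ e ∈ C, q ∈ e) → (cycleGraph C).Reachable p q)

/-- Two edge sets have the same signature on the `m × n` grid. -/
def SameSignature (m n : ℤ) (C₁ C₂ : Set Edge) : Prop :=
  ∀ a b : ℤ, isCell m n a b → cellCount C₁ a b = cellCount C₂ a b

/-- Membership in the closed diamond `D(i)` of the `n × n` grid. -/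
def inDiamond (n i : ℤ) (p : V) : Prop :=
  i + 1 ≤ p.1 + p.2 ∧ p.1 + p.2 ≤ 2 * n - i + 1 ∧ -i ≤ p.1 - p.2 ∧ p.1 - p.2 ≤ i

/-- The diamond edge set `B(i)`: all edges of the `n × n` grid contained in `D(i)`. -/
def diamondSet (n i : ℤ) : Set Edge :=
  {e | gridEdge n n e ∧ ∀ p ∈ e, inDiamond n i p}

/-- The symmetric difference of two edge sets. -/
def sdiff (A B : Set Edge) : Set Edge := (A \ B) ∪ (B \ A)


-- AUX

def eH (i j : ℤ) : Edge := s((i, j), (i + 1, j))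
def eV (i j : ℤ) : Edge := s((i, j), (i, j + 1))

open scoped Classical in
noncomputable def ind (E : Set Edge) (e : Edge) : ℕ := if e ∈ E then 1 else 0

lemma ind_le_one (E : Set Edge) (e : Edge) : ind E e ≤ 1 := by
  unfold ind; split <;> omega

lemma mem_iff_ind (E : Set Edge) (e : Edge) : e ∈ E ↔ ind E e = 1 := by
  unfold ind; split <;> simp_all

lemma ncard_inter_four (E : Set Edge) (a b c d : Edge)
    (hab : a ≠ b) (hac : a ≠ c) (had : a ≠ d) (hbc : b ≠ c) (hbd : b ≠ d) (hcd : c ≠ d) :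
    (E ∩ {a, b, c, d}).ncard = ind E a + ind E b + ind E c + ind E d := by
  classical
  have h : E ∩ {a, b, c, d} = ↑(({a, b, c, d} : Finset Edge).filter (· ∈ E)) := by
    ext e; simp [and_comm]
  rw [h, Set.ncard_coe_finset, Finset.filter_insert, Finset.filter_insert,
    Finset.filter_insert, Finset.filter_singleton]
  by_cases ha : a ∈ E <;> by_cases hb : b ∈ E <;> by_cases hc : c ∈ E <;> by_cases hd : d ∈ E <;>
    simp [ha, hb, hc, hd, ind, Finset.card_insert_of_notMem, hab, hac, had, hbc, hbd, hcd]

lemma eH_grid {m n i j : ℤ} (h : gridEdge m n (eH i j)) :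
    1 ≤ i ∧ i + 1 ≤ m ∧ 1 ≤ j ∧ j ≤ n := by
  obtain ⟨p, q, heq, hp, hq, dir⟩ := h
  simp only [eH, Sym2.eq_iff, Prod.ext_iff] at heq
  obtain ⟨hp1, hp2, hq1, hq2⟩ := hp
  obtain ⟨hr1, hr2, hs1, hs2⟩ := hq
  rcases heq with ⟨⟨e1, e2⟩, ⟨e3, e4⟩⟩ | ⟨⟨e1, e2⟩, ⟨e3, e4⟩⟩ <;> rcases dir with ⟨d1, d2⟩ | ⟨d1, d2⟩ <;> omega

lemma eV_grid {m n i j : ℤ} (h : gridEdge m n (eV i j)) :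
    1 ≤ i ∧ i ≤ m ∧ 1 ≤ j ∧ j + 1 ≤ n := by
  obtain ⟨p, q, heq, hp, hq, dir⟩ := h
  simp only [eV, Sym2.eq_iff, Prod.ext_iff] at heq
  obtain ⟨hp1, hp2, hq1, hq2⟩ := hp
  obtain ⟨hr1, hr2, hs1, hs2⟩ := hq
  rcases heq with ⟨⟨e1, e2⟩, ⟨e3, e4⟩⟩ | ⟨⟨e1, e2⟩, ⟨e3, e4⟩⟩ <;> rcases dir with ⟨d1, d2⟩ | ⟨d1, d2⟩ <;> omega

lemma edge_class {m n : ℤ} {e : Edge} (h : gridEdge m n e) :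
    ∃ i j : ℤ, e = eH i j ∨ e = eV i j := by
  obtain ⟨p, q, heq, hp, hq, dir⟩ := h
  rcases dir with ⟨d1, d2⟩ | ⟨d1, d2⟩
  · have hq' : q = (p.1 + 1, p.2) := Prod.ext d1 d2
    exact ⟨p.1, p.2, Or.inl (by rw [heq, hq']; rfl)⟩
  · have hq' : q = (p.1, p.2 + 1) := Prod.ext d1 d2
    exact ⟨p.1, p.2, Or.inr (by rw [heq, hq']; rfl)⟩

lemma degree_eq {m n : ℤ} (E : Set Edge) (hE : ∀ e ∈ E, gridEdge m n e) (i j : ℤ) :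
    degree E (i, j) =
      ind E (eH (i - 1) j) + ind E (eH i j) + ind E (eV i (j - 1)) + ind E (eV i j) := by
  have hset : {e ∈ E | ((i, j) : V) ∈ e} =
      E ∩ {eH (i - 1) j, eH i j, eV i (j - 1), eV i j} := by
    ext e
    constructor
    · rintro ⟨heE, hmem⟩
      refine ⟨heE, ?_⟩
      obtain ⟨p, q, heq, hp, hq, dir⟩ := hE e heE
      rw [heq, Sym2.mem_iff] at hmem
      simp only [Set.mem_insert_iff, Set.mem_singleton_iff, eH, eV, heq, Sym2.eq_iff,
        Prod.ext_iff]
      rcases hmem with hm | hm <;> rcases dir with ⟨d1, d2⟩ | ⟨d1, d2⟩ <;>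
        rw [Prod.ext_iff] at hm <;> simp_all <;> omega
    · rintro ⟨heE, hmem⟩
      refine ⟨heE, ?_⟩
      simp only [Set.mem_insert_iff, Set.mem_singleton_iff] at hmem
      rcases hmem with rfl | rfl | rfl | rfl <;>
        simp [eH, eV, Sym2.mem_iff, Prod.ext_iff] <;> omega
  rw [degree, hset]
  apply ncard_inter_four <;> simp [eH, eV, Sym2.eq_iff, Prod.ext_iff] <;> omega

lemma cellCount_eq (E : Set Edge) (a b : ℤ) :
    cellCount E a b =
      ind E (eH a b) + ind E (eV a b) + ind E (eV (a + 1) b) + ind E (eH a (b + 1)) := by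
  have : cellEdges a b = {eH a b, eV a b, eV (a + 1) b, eH a (b + 1)} := rfl
  rw [cellCount, this]
  apply ncard_inter_four <;> simp [eH, eV, Sym2.eq_iff, Prod.ext_iff] <;> omega


theorem stmt0 (m n : ℤ) (E₁ E₂ : Set Edge)
    (h₁ : TotallyEven m n E₁) (h₂ : TotallyEven m n E₂)
    (hagree : ∀ i : ℤ,
      (s((i, (1 : ℤ)), (i + 1, (1 : ℤ))) ∈ E₁ ↔ s((i, (1 : ℤ)), (i + 1, (1 : ℤ))) ∈ E₂)) :
    E₁ = E₂ := by
  obtain ⟨hg₁, hd₁, hc₁⟩ := h₁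
  obtain ⟨hg₂, hd₂, hc₂⟩ := h₂
  have supH : ∀ (E : Set Edge), (∀ e ∈ E, gridEdge m n e) → ∀ i j : ℤ,
      ¬(1 ≤ i ∧ i + 1 ≤ m ∧ 1 ≤ j ∧ j ≤ n) → ind E (eH i j) = 0 := by
    intro E hg i j hbad
    unfold ind
    exact if_neg (fun hmem => hbad (eH_grid (hg _ hmem)))
  have supV : ∀ (E : Set Edge), (∀ e ∈ E, gridEdge m n e) → ∀ i j : ℤ,
      ¬(1 ≤ i ∧ i ≤ m ∧ 1 ≤ j ∧ j + 1 ≤ n) → ind E (eV i j) = 0 := by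
    intro E hg i j hbad
    unfold ind
    exact if_neg (fun hmem => hbad (eV_grid (hg _ hmem)))
  have vert : ∀ (E : Set Edge), (∀ e ∈ E, gridEdge m n e) → (∀ p : V, Even (degree E p)) →
      ∀ i j : ℤ,
      (ind E (eH (i - 1) j) + ind E (eH i j) + ind E (eV i (j - 1)) + ind E (eV i j)) % 2 = 0 := by
    intro E hg hd i j
    have := hd (i, j)
    rwa [degree_eq E hg i j, Nat.even_iff] at this
  have cell : ∀ (E : Set Edge), (∀ a b : ℤ, isCell m n a b → Even (cellCount E a b)) →
      ∀ a b : ℤ, isCell m n a b →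
      (ind E (eH a b) + ind E (eV a b) + ind E (eV (a + 1) b) + ind E (eH a (b + 1))) % 2 = 0 := by
    intro E hc a b hcell
    have := hc a b hcell
    rwa [cellCount_eq E a b, Nat.even_iff] at this
  have base_h : ∀ i : ℤ, ind E₁ (eH i 1) = ind E₂ (eH i 1) := by
    intro i
    unfold ind eH
    by_cases h : s((i, (1 : ℤ)), (i + 1, (1 : ℤ))) ∈ E₁
    · rw [if_pos h, if_pos ((hagree i).1 h)]
    · rw [if_neg h, if_neg (fun hh => h ((hagree i).2 hh))]
  have stepV : ∀ j : ℤ, (∀ i, ind E₁ (eH i j) = ind E₂ (eH i j)) →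
      (∀ i, ind E₁ (eV i (j - 1)) = ind E₂ (eV i (j - 1))) →
      ∀ i, ind E₁ (eV i j) = ind E₂ (eV i j) := by
    intro j hH hV i
    have p1 := vert E₁ hg₁ hd₁ i j
    have p2 := vert E₂ hg₂ hd₂ i j
    have b1 := ind_le_one E₁ (eV i j)
    have b2 := ind_le_one E₂ (eV i j)
    rw [hH (i - 1), hH i, hV i] at p1
    omega
  have stepH : ∀ j : ℤ, 1 ≤ j → (∀ i, ind E₁ (eH i j) = ind E₂ (eH i j)) →
      (∀ i, ind E₁ (eV i j) = ind E₂ (eV i j)) →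
      ∀ i, ind E₁ (eH i (j + 1)) = ind E₂ (eH i (j + 1)) := by
    intro j hj hH hV i
    by_cases hgrid : 1 ≤ i ∧ i + 1 ≤ m ∧ 1 ≤ j + 1 ∧ j + 1 ≤ n
    · have hcell : isCell m n i j := ⟨hgrid.1, hgrid.2.1, hj, hgrid.2.2.2⟩
      have p1 := cell E₁ hc₁ i j hcell
      have p2 := cell E₂ hc₂ i j hcell
      have b1 := ind_le_one E₁ (eH i (j + 1))
      have b2 := ind_le_one E₂ (eH i (j + 1))
      rw [hH i, hV i, hV (i + 1)] at p1
      omega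
    · rw [supH E₁ hg₁ i (j + 1) hgrid, supH E₂ hg₂ i (j + 1) hgrid]
  have rows : ∀ k : ℕ, (∀ i, ind E₁ (eH i ((k : ℤ) + 1)) = ind E₂ (eH i ((k : ℤ) + 1))) ∧
      (∀ i, ind E₁ (eV i ((k : ℤ) + 1)) = ind E₂ (eV i ((k : ℤ) + 1))) := by
    intro k
    induction k with
    | zero =>
      refine ⟨by simpa using base_h, ?_⟩
      have := stepV 1 base_h (fun i => by
        rw [supV E₁ hg₁ i (1 - 1) (by omega), supV E₂ hg₂ i (1 - 1) (by omega)])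
      simpa using this
    | succ k ih =>
      have hc : ((k + 1 : ℕ) : ℤ) + 1 = ((k : ℤ) + 1) + 1 := by push_cast; ring
      have hh : ∀ i, ind E₁ (eH i (((k : ℤ) + 1) + 1)) = ind E₂ (eH i (((k : ℤ) + 1) + 1)) :=
        stepH ((k : ℤ) + 1) (by omega) ih.1 ih.2
      refine ⟨fun i => by rw [hc]; exact hh i, fun i => ?_⟩
      rw [hc]
      refine stepV (((k : ℤ) + 1) + 1) hh (fun i' => ?_) i
      have he : ((k : ℤ) + 1) + 1 - 1 = (k : ℤ) + 1 := by ring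
      rw [he]
      exact ih.2 i'
  have allH : ∀ i j : ℤ, ind E₁ (eH i j) = ind E₂ (eH i j) := by
    intro i j
    by_cases hj : 1 ≤ j
    · have hk : j = ((j - 1).toNat : ℤ) + 1 := by omega
      rw [hk]
      exact (rows (j - 1).toNat).1 i
    · rw [supH E₁ hg₁ i j (by omega), supH E₂ hg₂ i j (by omega)]
  have allV : ∀ i j : ℤ, ind E₁ (eV i j) = ind E₂ (eV i j) := by
    intro i j
    by_cases hj : 1 ≤ j
    · have hk : j = ((j - 1).toNat : ℤ) + 1 := by omega
      rw [hk]
      exact (rows (j - 1).toNat).2 i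
    · rw [supV E₁ hg₁ i j (by omega), supV E₂ hg₂ i j (by omega)]
  ext e
  constructor <;> intro he
  · obtain ⟨i, j, rfl | rfl⟩ := edge_class (hg₁ e he)
    · rw [mem_iff_ind] at he ⊢; rw [← allH i j]; exact he
    · rw [mem_iff_ind] at he ⊢; rw [← allV i j]; exact he
  · obtain ⟨i, j, rfl | rfl⟩ := edge_class (hg₂ e he)
    · rw [mem_iff_ind] at he ⊢; rw [allH i j]; exact he
    · rw [mem_iff_ind] at he ⊢; rw [allV i j]; exact he

end Slitherlink
end

section
/- For each 1 ≤ i ≤ n−1, the diamond set B(i) on the n × n grid is a totally even set, where B(i) consists of all edges of the grid contained in the closed rectangle (diamond) with vertices (1/2, i+1/2), (i+1/2, 1/2), (n−i+1/2, n+1/2), (n+1/2, n−i+1/2). -/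
namespace Slitherlink

open Classical in
lemma ncard_inter_singleton (E : Set Edge) (f : Edge) :
    (E ∩ {f}).ncard = if f ∈ E then 1 else 0 := by
  split_ifs with h
  · rw [Set.inter_eq_right.mpr (by simpa using h)]; exact Set.ncard_singleton f
  · rw [Set.ncard_eq_zero]
    ext e; simp only [Set.mem_inter_iff, Set.mem_singleton_iff, Set.mem_empty_iff_false,
      iff_false, not_and]
    rintro he rfl; exact h he

open Classical in
lemma ncard_inter_four_s1 (E : Set Edge) (f1 f2 f3 f4 : Edge)
    (h12 : f1 ≠ f2) (h13 : f1 ≠ f3) (h14 : f1 ≠ f4)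
    (h23 : f2 ≠ f3) (h24 : f2 ≠ f4) (h34 : f3 ≠ f4) :
    (E ∩ {f1, f2, f3, f4}).ncard =
      (if f1 ∈ E then 1 else 0) + (if f2 ∈ E then 1 else 0) +
      (if f3 ∈ E then 1 else 0) + (if f4 ∈ E then 1 else 0) := by
  have hsplit : E ∩ {f1, f2, f3, f4} =
      (E ∩ {f1}) ∪ ((E ∩ {f2}) ∪ ((E ∩ {f3}) ∪ (E ∩ {f4}))) := by
    ext e; simp [Set.mem_inter_iff]; tauto
  have fin : ∀ f : Edge, (E ∩ {f}).Finite := fun f =>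
    Set.Finite.inter_of_right (Set.finite_singleton f) E
  have d34 : Disjoint (E ∩ {f3}) (E ∩ {f4}) := by
    rw [Set.disjoint_left]; rintro e ⟨_, rfl⟩ ⟨_, h⟩; exact h34 h
  have d234 : Disjoint (E ∩ {f2}) ((E ∩ {f3}) ∪ (E ∩ {f4})) := by
    rw [Set.disjoint_left]; rintro e ⟨_, rfl⟩ (⟨_, h⟩ | ⟨_, h⟩)
    exacts [h23 h, h24 h]
  have d1 : Disjoint (E ∩ {f1}) ((E ∩ {f2}) ∪ ((E ∩ {f3}) ∪ (E ∩ {f4}))) := by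
    rw [Set.disjoint_left]; rintro e ⟨_, rfl⟩ (⟨_, h⟩ | ⟨_, h⟩ | ⟨_, h⟩)
    exacts [h12 h, h13 h, h14 h]
  rw [hsplit,
    Set.ncard_union_eq d1 (fin f1) (((fin f2).union ((fin f3).union (fin f4)))),
    Set.ncard_union_eq d234 (fin f2) ((fin f3).union (fin f4)),
    Set.ncard_union_eq d34 (fin f3) (fin f4),
    ncard_inter_singleton, ncard_inter_singleton, ncard_inter_singleton,
    ncard_inter_singleton]
  ring

lemma hmem (n i x y : ℤ) :
    s(((x,y) : V), ((x+1,y) : V)) ∈ diamondSet n i ↔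
      (1 ≤ x ∧ x + 1 ≤ n ∧ 1 ≤ y ∧ y ≤ n ∧ i + 1 ≤ x + y ∧ x + y ≤ 2*n - i ∧
        -i ≤ x - y ∧ x - y ≤ i - 1) := by
  constructor
  · rintro ⟨⟨p, q, heq, hp, hq, hstep⟩, hd⟩
    have h1 := hd (x, y) (by rw [Sym2.mem_iff]; left; rfl)
    have h2 := hd (x+1, y) (by rw [Sym2.mem_iff]; right; rfl)
    rw [Sym2.eq_iff] at heq
    unfold gridVertex at hp hq
    unfold inDiamond at h1 h2
    simp only at h1 h2
    rcases heq with ⟨h3, h4⟩ | ⟨h3, h4⟩ <;> subst h3 <;> subst h4 <;>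
      simp only at hp hq <;> omega
  · rintro h
    refine ⟨⟨(x, y), (x+1, y), rfl, ?_, ?_, Or.inl ⟨rfl, rfl⟩⟩, ?_⟩
    · unfold gridVertex; simp only; omega
    · unfold gridVertex; simp only; omega
    · intro p hp
      rw [Sym2.mem_iff] at hp
      rcases hp with hp | hp <;> subst hp <;> unfold inDiamond <;> simp only <;> omega

lemma vmem (n i x y : ℤ) :
    s(((x,y) : V), ((x,y+1) : V)) ∈ diamondSet n i ↔
      (1 ≤ x ∧ x ≤ n ∧ 1 ≤ y ∧ y + 1 ≤ n ∧ i + 1 ≤ x + y ∧ x + y ≤ 2*n - i ∧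
        -i + 1 ≤ x - y ∧ x - y ≤ i) := by
  constructor
  · rintro ⟨⟨p, q, heq, hp, hq, hstep⟩, hd⟩
    have h1 := hd (x, y) (by rw [Sym2.mem_iff]; left; rfl)
    have h2 := hd (x, y+1) (by rw [Sym2.mem_iff]; right; rfl)
    rw [Sym2.eq_iff] at heq
    unfold gridVertex at hp hq
    unfold inDiamond at h1 h2
    simp only at h1 h2
    rcases heq with ⟨h3, h4⟩ | ⟨h3, h4⟩ <;> subst h3 <;> subst h4 <;>
      simp only at hp hq <;> omega
  · rintro h
    refine ⟨⟨(x, y), (x, y+1), rfl, ?_, ?_, Or.inr ⟨rfl, rfl⟩⟩, ?_⟩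
    · unfold gridVertex; simp only; omega
    · unfold gridVertex; simp only; omega
    · intro p hp
      rw [Sym2.mem_iff] at hp
      rcases hp with hp | hp <;> subst hp <;> unfold inDiamond <;> simp only <;> omega

lemma deg_split (n i x y : ℤ) :
    {e ∈ diamondSet n i | ((x, y) : V) ∈ e} =
      diamondSet n i ∩ {s(((x-1,y) : V), ((x,y) : V)), s(((x,y) : V), ((x+1,y) : V)),
        s(((x,y-1) : V), ((x,y) : V)), s(((x,y) : V), ((x,y+1) : V))} := by
  ext e
  simp only [Set.mem_setOf_eq, Set.mem_inter_iff, Set.mem_insert_iff, Set.mem_singleton_iff,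
    and_congr_right_iff]
  intro he
  constructor
  · intro hp
    obtain ⟨⟨a1, a2⟩, ⟨b1, b2⟩, rfl, -, -, hstep⟩ := he.1
    rw [Sym2.mem_iff] at hp
    simp only [Prod.mk.injEq] at hstep
    rcases hstep with ⟨rfl, rfl⟩ | ⟨rfl, rfl⟩ <;>
      (rcases hp with hp | hp <;> rw [Prod.ext_iff] at hp <;> simp only at hp <;>
        obtain ⟨rfl, rfl⟩ := hp) <;> norm_num
  · rintro (rfl | rfl | rfl | rfl) <;> rw [Sym2.mem_iff] <;> simp


theorem stmt1 (n i : ℤ) (hi : 1 ≤ i) (hin : i ≤ n - 1) :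
    TotallyEven n n (diamondSet n i) := by
  classical
  refine ⟨fun e he => he.1, ?_, ?_⟩
  · rintro ⟨x, y⟩
    unfold degree
    rw [deg_split n i x y, ncard_inter_four_s1 _ _ _ _ _
      (by intro h; rw [Sym2.eq_iff] at h; simp only [Prod.mk.injEq] at h; omega)
      (by intro h; rw [Sym2.eq_iff] at h; simp only [Prod.mk.injEq] at h; omega)
      (by intro h; rw [Sym2.eq_iff] at h; simp only [Prod.mk.injEq] at h; omega)
      (by intro h; rw [Sym2.eq_iff] at h; simp only [Prod.mk.injEq] at h; omega)
      (by intro h; rw [Sym2.eq_iff] at h; simp only [Prod.mk.injEq] at h; omega)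
      (by intro h; rw [Sym2.eq_iff] at h; simp only [Prod.mk.injEq] at h; omega)]
    have h1 := hmem n i (x-1) y
    rw [show x - 1 + 1 = x from by ring] at h1
    have h2 := hmem n i x y
    have h3 := vmem n i x (y-1)
    rw [show y - 1 + 1 = y from by ring] at h3
    have h4 := vmem n i x y
    rw [if_congr h1 rfl rfl, if_congr h2 rfl rfl, if_congr h3 rfl rfl, if_congr h4 rfl rfl]
    split_ifs <;> first | decide | (exfalso; omega)
  · rintro a b ⟨ha1, ha2, hb1, hb2⟩
    unfold cellCount cellEdges
    rw [ncard_inter_four_s1 _ _ _ _ _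
      (by intro h; rw [Sym2.eq_iff] at h; simp only [Prod.mk.injEq] at h; omega)
      (by intro h; rw [Sym2.eq_iff] at h; simp only [Prod.mk.injEq] at h; omega)
      (by intro h; rw [Sym2.eq_iff] at h; simp only [Prod.mk.injEq] at h; omega)
      (by intro h; rw [Sym2.eq_iff] at h; simp only [Prod.mk.injEq] at h; omega)
      (by intro h; rw [Sym2.eq_iff] at h; simp only [Prod.mk.injEq] at h; omega)
      (by intro h; rw [Sym2.eq_iff] at h; simp only [Prod.mk.injEq] at h; omega)]
    rw [if_congr (hmem n i a b) rfl rfl, if_congr (vmem n i a b) rfl rfl,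
      if_congr (vmem n i (a+1) b) rfl rfl, if_congr (hmem n i a (b+1)) rfl rfl]
    split_ifs <;> first | decide | (exfalso; omega)

end Slitherlink
end
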